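/- Let A be a topological ring, B ⊆ A a dense subring, and M, M′ admissible right A-modules (for every element, its annihilator in A is open). Then every B-linear map f : M → M′ is automatically A-linear. In particular, if M and M′ are isomorphic as right B-modules then they are isomorphic as right A-modules. -/

import Mathlib

/-! Given `a` and `m`, admissibility of `M` and `M'` makes the set of `x` that act like `a` on
both `m` and `f m` an open neighbourhood of `a`. By density it contains some `b ∈ B`, and
`f (m a) = f (m b) = f m b = f m a`. -/

open MulOpposite

section Admissible

variable {A M : Type*} [Ring A] [TopologicalSpace A] [ContinuousSub A]
  [AddCommGroup M] [Module Aᵐᵒᵖ M]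

theorem isOpen_setOf_op_smul_eq (hadm : ∀ m : M, IsOpen {a : A | op a • m = 0})
    (a : A) (m : M) : IsOpen {x : A | op x • m = op a • m} := by
  have hpre : {x : A | op x • m = op a • m} = (· - a) ⁻¹' {y : A | op y • m = 0} := by
    ext x
    simp only [Set.mem_ofPred_eq, Set.mem_preimage, op_sub, sub_smul, sub_eq_zero]
  rw [hpre]
  exact (hadm m).preimage (continuous_sub_right a)

variable {M' : Type*} [AddCommGroup M'] [Module Aᵐᵒᵖ M']

theorem map_op_smul_of_dense {S : Set A} (hS : Dense S)
    (hadmM : ∀ m : M, IsOpen {a : A | op a • m = 0})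
    (hadmM' : ∀ m : M', IsOpen {a : A | op a • m = 0})
    (f : M →+ M') (hf : ∀ b ∈ S, ∀ m : M, f (op b • m) = op b • f m)
    (a : A) (m : M) : f (op a • m) = op a • f m := by
  obtain ⟨b, hbS, hbm, hbfm⟩ := hS.exists_mem_open
    ((isOpen_setOf_op_smul_eq hadmM a m).inter (isOpen_setOf_op_smul_eq hadmM' a (f m)))
    ⟨a, rfl, rfl⟩
  calc f (op a • m) = f (op b • m) := by rw [hbm.out]
    _ = op b • f m := hf b hbS m
    _ = op a • f m := hbfm

end Admissible

/-- Let `A` be a topological ring, `B ⊆ A` a dense subring, and `M`, `M′`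
admissible right `A`-modules (annihilators of elements are open). Then every
`B`-linear (additive) map `f : M → M′` is automatically `A`-linear; in
particular if `M` and `M′` are isomorphic as right `B`-modules then they are
isomorphic as right `A`-modules. -/
theorem linear_over_dense_subring {A : Type*} [Ring A] [TopologicalSpace A]
    [IsTopologicalRing A] (B : Subring A) (hB : Dense (B : Set A))
    {M M' : Type*} [AddCommGroup M] [AddCommGroup M']
    [Module Aᵐᵒᵖ M] [Module Aᵐᵒᵖ M']
    (hadmM : ∀ m : M, IsOpen {a : A | MulOpposite.op a • m = 0})
    (hadmM' : ∀ m : M', IsOpen {a : A | MulOpposite.op a • m = 0}) :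
    (∀ f : M →+ M',
      (∀ b ∈ B, ∀ m : M, f (MulOpposite.op b • m) = MulOpposite.op b • f m) →
      ∀ (a : A) (m : M), f (MulOpposite.op a • m) = MulOpposite.op a • f m) ∧
    ((∃ e : M ≃+ M',
        ∀ b ∈ B, ∀ m : M, e (MulOpposite.op b • m) = MulOpposite.op b • e m) →
      ∃ e : M ≃+ M',
        ∀ (a : A) (m : M), e (MulOpposite.op a • m) = MulOpposite.op a • e m) :=
  ⟨map_op_smul_of_dense hB hadmM hadmM',
    fun ⟨e, he⟩ => ⟨e, map_op_smul_of_dense hB hadmM hadmM' e.toAddMonoidHom he⟩⟩
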